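/- Lower bound of propagated information (Theorem 1 of the paper): with S = R^{-1/2} H having SVD S = U_S D_S V_Sᵀ, and v_CGT the unit eigenvector of Φ Φᵀ for its largest eigenvalue, one has σ_max(Φᵀ Hᵀ R⁻¹ H Φ) ≥ σ_max(Φ Φᵀ) · Σᵢ αᵢ² σᵢ(Hᵀ R⁻¹ H), where αᵢ = ⟨v_{S,i}, v_CGT⟩ is the i-th component of V_Sᵀ v_CGT. -/
import Mathlib


open Matrix

/-- The largest singular value of a square matrix `A`: `sup { ‖A x‖ : ‖x‖ = 1 }`. -/
noncomputable def sigmaMax {n : ℕ} (A : Matrix (Fin n) (Fin n) ℝ) : ℝ :=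
  ⨆ x : {x : Fin n → ℝ // x ⬝ᵥ x = 1}, Real.sqrt (A.mulVec x.1 ⬝ᵥ A.mulVec x.1)


lemma sigmaMax_bdd {n : ℕ} (A : Matrix (Fin n) (Fin n) ℝ) :
    BddAbove (Set.range fun x : {x : Fin n → ℝ // x ⬝ᵥ x = 1} =>
      Real.sqrt (A.mulVec x.1 ⬝ᵥ A.mulVec x.1)) := by
  refine ⟨Real.sqrt (∑ i, ∑ j, A i j ^ 2), ?_⟩
  rintro y ⟨x, rfl⟩
  apply Real.sqrt_le_sqrt
  have hx : ∑ j, x.1 j ^ 2 = 1 := by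
    have := x.2; simpa [dotProduct, pow_two] using this
  simp only [dotProduct, mulVec, dotProduct]
  refine Finset.sum_le_sum fun i _ => ?_
  have := Finset.sum_mul_sq_le_sq_mul_sq Finset.univ (fun j => A i j) x.1
  calc (∑ j, A i j * x.1 j) * (∑ j, A i j * x.1 j)
      = (∑ j, A i j * x.1 j) ^ 2 := (sq _).symm
    _ ≤ (∑ j, A i j ^ 2) * ∑ j, x.1 j ^ 2 := this
    _ = ∑ j, A i j ^ 2 := by rw [hx, mul_one]

lemma le_sigmaMax {n : ℕ} (A : Matrix (Fin n) (Fin n) ℝ) (u : Fin n → ℝ)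
    (hu : u ⬝ᵥ u = 1) : u ⬝ᵥ A.mulVec u ≤ sigmaMax A := by
  have h1 : Real.sqrt (A.mulVec u ⬝ᵥ A.mulVec u) ≤ sigmaMax A :=
    le_ciSup (sigmaMax_bdd A) ⟨u, hu⟩
  refine le_trans ?_ h1
  rcases le_or_gt (u ⬝ᵥ A.mulVec u) 0 with h | h
  · exact h.trans (Real.sqrt_nonneg _)
  · rw [show u ⬝ᵥ A.mulVec u = Real.sqrt ((u ⬝ᵥ A.mulVec u) ^ 2) by
      rw [Real.sqrt_sq h.le]]
    apply Real.sqrt_le_sqrt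
    have hu' : ∑ j, u j ^ 2 = 1 := by simpa [dotProduct, pow_two] using hu
    have := Finset.sum_mul_sq_le_sq_mul_sq Finset.univ u (A.mulVec u)
    calc (u ⬝ᵥ A.mulVec u) ^ 2 = (∑ j, u j * A.mulVec u j) ^ 2 := rfl
      _ ≤ (∑ j, u j ^ 2) * ∑ j, A.mulVec u j ^ 2 := this
      _ = ∑ j, A.mulVec u j ^ 2 := by rw [hu', one_mul]
      _ = A.mulVec u ⬝ᵥ A.mulVec u := by simp [dotProduct, pow_two]

lemma sigmaMax_nonneg {n : ℕ} (A : Matrix (Fin n) (Fin n) ℝ) (u : Fin n → ℝ)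
    (hu : u ⬝ᵥ u = 1) : 0 ≤ sigmaMax A :=
  le_trans (Real.sqrt_nonneg _) (le_ciSup (sigmaMax_bdd A) ⟨u, hu⟩)

/-- Lower bound of the propagated information (Theorem 1).  With `S = R^{-1/2} H` having
SVD `S = U_S D_S V_Sᵀ` (singular values `σ` in decreasing order), and `v_CGT` a unit
eigenvector of `Φ Φᵀ` for its largest eigenvalue,
`σ_max(Φᵀ Hᵀ R⁻¹ H Φ) ≥ σ_max(Φ Φᵀ) · Σᵢ αᵢ² σᵢ(Hᵀ R⁻¹ H)` where
`αᵢ = ⟨v_{S,i}, v_CGT⟩ = (V_Sᵀ v_CGT)ᵢ` and `σᵢ(Hᵀ R⁻¹ H) = σᵢ²`. -/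
theorem propagated_info_lower_bound {n : ℕ} (Φ H R : Matrix (Fin n) (Fin n) ℝ)
    (hR : R.PosDef) (Rh : Matrix (Fin n) (Fin n) ℝ) (hRhSym : Rhᵀ = Rh)
    (hRh : Rh * Rh = R⁻¹)
    (US VS : Matrix (Fin n) (Fin n) ℝ) (σ : Fin n → ℝ)
    (hUS : US ∈ Matrix.orthogonalGroup (Fin n) ℝ)
    (hVS : VS ∈ Matrix.orthogonalGroup (Fin n) ℝ)
    (hσnonneg : ∀ i, 0 ≤ σ i) (hσmono : Antitone σ)
    (hSVD : Rh * H = US * Matrix.diagonal σ * VSᵀ)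
    (vCGT : Fin n → ℝ) (hUnit : vCGT ⬝ᵥ vCGT = 1)
    (hEig : (Φ * Φᵀ).mulVec vCGT = sigmaMax (Φ * Φᵀ) • vCGT) :
    sigmaMax (Φ * Φᵀ) * ∑ i, (VSᵀ.mulVec vCGT i) ^ 2 * σ i ^ 2 ≤
      sigmaMax (Φᵀ * Hᵀ * R⁻¹ * H * Φ) := by
  obtain ⟨L, hLdef⟩ : ∃ L, L = sigmaMax (Φ * Φᵀ) := ⟨_, rfl⟩
  obtain ⟨S, hSdef⟩ : ∃ S, S = Rh * H := ⟨_, rfl⟩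
  obtain ⟨Q, hQdef⟩ : ∃ Q, Q = ∑ i, (VSᵀ.mulVec vCGT i) ^ 2 * σ i ^ 2 := ⟨_, rfl⟩
  rw [← hLdef] at hEig
  rw [← hLdef, ← hQdef]
  have hUSo : USᵀ * US = 1 := by
    have := (Matrix.mem_orthogonalGroup_iff' (Fin n) ℝ).mp hUS
    simpa [star] using this
  have hd : Matrix.diagonal σ * Matrix.diagonal σ
      = Matrix.diagonal (fun i => σ i ^ 2) := by
    rw [Matrix.diagonal_mul_diagonal]
    congr 1; funext i; ring
  have hSS : Sᵀ * S = VS * Matrix.diagonal (fun i => σ i ^ 2) * VSᵀ := by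
    calc Sᵀ * S
        = VS * (Matrix.diagonal σ * ((USᵀ * US) * (Matrix.diagonal σ * VSᵀ))) := by
          rw [hSdef, hSVD]
          simp [Matrix.transpose_mul, Matrix.diagonal_transpose, Matrix.mul_assoc]
      _ = VS * Matrix.diagonal (fun i => σ i ^ 2) * VSᵀ := by
          rw [hUSo, Matrix.one_mul]
          simp only [← Matrix.mul_assoc]
          rw [Matrix.mul_assoc VS, hd]
  have hM : Φᵀ * Hᵀ * R⁻¹ * H * Φ = Φᵀ * ((Sᵀ * S) * Φ) := by
    rw [hSdef, Matrix.transpose_mul, hRhSym, ← hRh]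
    noncomm_ring
  have hQ : Q = vCGT ⬝ᵥ (Sᵀ * S).mulVec vCGT := by
    rw [hQdef, hSS, ← Matrix.mulVec_mulVec, ← Matrix.mulVec_mulVec,
      Matrix.dotProduct_mulVec, ← Matrix.mulVec_transpose]
    simp only [dotProduct, Matrix.mulVec_diagonal]
    exact Finset.sum_congr rfl fun i _ => by ring
  have hQ0 : 0 ≤ Q := by
    rw [hQdef]
    exact Finset.sum_nonneg fun i _ => mul_nonneg (sq_nonneg _) (sq_nonneg _)
  have hL0 : 0 ≤ L := hLdef ▸ sigmaMax_nonneg _ vCGT hUnit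
  rcases eq_or_lt_of_le hL0 with h0 | hpos
  · rw [← h0, zero_mul]
    exact sigmaMax_nonneg _ vCGT hUnit
  · obtain ⟨w, hwdef⟩ : ∃ w, w = Φᵀ.mulVec vCGT := ⟨_, rfl⟩
    have hPhiw : Φ.mulVec w = L • vCGT := by
      rw [hwdef, Matrix.mulVec_mulVec, hEig]
    have hww : w ⬝ᵥ w = L := by
      have h1 : vCGT ⬝ᵥ Φ.mulVec w = w ⬝ᵥ w := by
        rw [Matrix.dotProduct_mulVec, ← Matrix.mulVec_transpose, ← hwdef]
      rw [← h1, hPhiw, dotProduct_smul, hUnit, smul_eq_mul, mul_one]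
    have key : w ⬝ᵥ (Φᵀ * Hᵀ * R⁻¹ * H * Φ).mulVec w = L ^ 2 * Q := by
      rw [hM, ← Matrix.mulVec_mulVec, Matrix.dotProduct_mulVec,
        Matrix.vecMul_transpose, hPhiw, ← Matrix.mulVec_mulVec, hPhiw,
        Matrix.mulVec_smul, smul_dotProduct, dotProduct_smul, hQ,
        smul_eq_mul, smul_eq_mul]
      ring
    obtain ⟨c, hcdef⟩ : ∃ c : ℝ, c = (Real.sqrt L)⁻¹ := ⟨_, rfl⟩
    have hc2 : c * c = L⁻¹ := by
      rw [hcdef, ← mul_inv, Real.mul_self_sqrt hpos.le]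
    obtain ⟨u, hudef⟩ : ∃ u, u = c • w := ⟨_, rfl⟩
    have huu : u ⬝ᵥ u = 1 := by
      rw [hudef, smul_dotProduct, dotProduct_smul, hww, smul_eq_mul, smul_eq_mul,
        ← mul_assoc, hc2]
      field_simp
    have huMu : u ⬝ᵥ (Φᵀ * Hᵀ * R⁻¹ * H * Φ).mulVec u = L * Q := by
      rw [hudef, Matrix.mulVec_smul, smul_dotProduct, dotProduct_smul, key,
        smul_eq_mul, smul_eq_mul, ← mul_assoc, hc2]
      field_simp
    calc L * Q = u ⬝ᵥ (Φᵀ * Hᵀ * R⁻¹ * H * Φ).mulVec u := huMu.symm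
      _ ≤ sigmaMax (Φᵀ * Hᵀ * R⁻¹ * H * Φ) := le_sigmaMax _ u huu
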